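/- Let j = k−1 and let A_0 be the set of all j-subsets of a fixed (j + r − 1)-set of vertices of [n] (i.e., A_0 is isomorphic to the complete j-uniform hypergraph K_{j+r−1}^j). Then the (r, A_0)-infection process in K_n^k percolates, for n large enough. In particular, ℓ_n(j+1, j, r) ≤ C(j + r − 1, j). -/
import Mathlib


open Finset

open Classical in
noncomputable def bootStep (V : Finset ℕ) (E : Finset (Finset ℕ)) (j r : ℕ)
    (A : Finset (Finset ℕ)) : Finset (Finset ℕ) :=
  A ∪ (V.powersetCard j).filter (fun J =>
    ∃ K : Fin r → Finset ℕ, ∃ Js : Fin r → Finset ℕ,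
      Function.Injective K ∧ Function.Injective Js ∧
      ∀ i : Fin r, K i ∈ E ∧ Js i ∈ A ∧ Js i ∪ J ⊆ K i)

/-- The infected sets at time `t` of the bootstrap percolation process on a hypergraph
with vertex set `V`, edge set `E`, evolving on `j`-sets with infection threshold `r`. -/
noncomputable def bootProc (V : Finset ℕ) (E : Finset (Finset ℕ)) (j r : ℕ)
    (A0 : Finset (Finset ℕ)) (t : ℕ) : Finset (Finset ℕ) :=
  (bootStep V E j r)^[t] A0

/-- The process on the complete `k`-uniform hypergraph on `V`. -/
noncomputable def compProc (V : Finset ℕ) (k j r : ℕ)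
    (A0 : Finset (Finset ℕ)) (t : ℕ) : Finset (Finset ℕ) :=
  bootProc V (V.powersetCard k) j r A0 t

/-- `A0` is contagious: eventually all `j`-sets of `V` are infected. -/
def Percolates (V : Finset ℕ) (k j r : ℕ) (A0 : Finset (Finset ℕ)) : Prop :=
  ∃ t, compProc V k j r A0 t = V.powersetCard j

/-- `ℓ_n(k,j,r)`: minimum size of a contagious `j`-configuration in `K_n^k`. -/
noncomputable def ellMin (n k j r : ℕ) : ℕ :=
  sInf {m | ∃ A0 : Finset (Finset ℕ), A0 ⊆ (range n).powersetCard j ∧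
    A0.card = m ∧ Percolates (range n) k j r A0}

open Classical in
/-- The extension set of a `(k-1)`-set `J` with respect to configuration `C` in the
complete `k`-uniform hypergraph on `V`. -/
noncomputable def extSet (V : Finset ℕ) (k : ℕ) (C : Finset (Finset ℕ))
    (J : Finset ℕ) : Finset ℕ :=
  V.filter (fun v => ∃ J' ∈ C, J' ≠ J ∧ J' ⊆ insert v J ∧ insert v J ∈ V.powersetCard k)

lemma aux_subset_powerset (V : Finset ℕ) (E : Finset (Finset ℕ)) (j r : ℕ)
    (A0 : Finset (Finset ℕ)) (h : A0 ⊆ V.powersetCard j) (t : ℕ) :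
    bootProc V E j r A0 t ⊆ V.powersetCard j := by
  classical
  induction t with
  | zero => exact h
  | succ t ih =>
    rw [bootProc, Function.iterate_succ_apply']
    exact Finset.union_subset ih (Finset.filter_subset _ _)

lemma aux_key (j r : ℕ) (hj : 1 ≤ j) (n : ℕ) (T : Finset ℕ) (hT : T ⊆ range n)
    (hTc : T.card = j + r - 1) :
    ∀ t (J : Finset ℕ), J ⊆ range n → J.card = j → (J \ T).card ≤ t →
      J ∈ compProc (range n) (j + 1) j r (T.powersetCard j) t := by
  classical
  intro t
  induction t with
  | zero =>
    intro J hJ hJc h0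
    have hJT : J ⊆ T := by
      rw [Nat.le_zero, Finset.card_eq_zero, Finset.sdiff_eq_empty_iff_subset] at h0
      exact h0
    simpa [compProc, bootProc, Finset.mem_powersetCard] using ⟨hJT, hJc⟩
  | succ t ih =>
    intro J hJ hJc h
    rw [compProc, bootProc, Function.iterate_succ_apply']
    by_cases hle : (J \ T).card ≤ t
    · exact Finset.mem_union_left _ (ih J hJ hJc hle)
    · have hcard : (J \ T).card = t + 1 := le_antisymm h (not_le.1 hle)
      have hne : (J \ T).Nonempty := Finset.card_pos.1 (by omega)
      obtain ⟨w, hw⟩ := hne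
      have hwJ : w ∈ J := (Finset.mem_sdiff.1 hw).1
      have hwT : w ∉ T := (Finset.mem_sdiff.1 hw).2
      set J0 := J.erase w with hJ0def
      have hJ0c : J0.card = j - 1 := by
        rw [hJ0def, Finset.card_erase_of_mem hwJ, hJc]
      have hJ0J : J0 ⊆ J := Finset.erase_subset _ _
      have hTJ0 : r ≤ (T \ J0).card := by
        have h1 : (T ∩ J0).card ≤ j - 1 := hJ0c ▸ Finset.card_le_card Finset.inter_subset_right
        have h2 : (T \ J0).card + (T ∩ J0).card = T.card :=
          Finset.card_sdiff_add_card_inter T J0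
        omega
      obtain ⟨u, hu, huc⟩ := Finset.exists_subset_card_eq hTJ0
      have e := (Finset.equivFinOfCardEq huc).symm
      set v : Fin r → ℕ := fun i => ((Finset.equivFinOfCardEq huc).symm i : ℕ) with hvdef
      have hvinj : Function.Injective v := fun i i' hii =>
        (Finset.equivFinOfCardEq huc).symm.injective (Subtype.ext hii)
      have hvmem : ∀ i, v i ∈ T \ J0 := fun i => hu ((Finset.equivFinOfCardEq huc).symm i).2
      have hvT : ∀ i, v i ∈ T := fun i => (Finset.mem_sdiff.1 (hvmem i)).1
      have hvJ0 : ∀ i, v i ∉ J0 := fun i => (Finset.mem_sdiff.1 (hvmem i)).2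
      have hJeq : insert w J0 = J := Finset.insert_erase hwJ
      have hvJ : ∀ i, v i ∉ J := by
        intro i hmem
        rw [← hJeq] at hmem
        rcases Finset.mem_insert.1 hmem with h1 | h1
        · exact hwT (h1 ▸ hvT i)
        · exact hvJ0 i h1
      apply Finset.mem_union_right
      rw [Finset.mem_filter]
      refine ⟨Finset.mem_powersetCard.2 ⟨hJ, hJc⟩, ?_⟩
      refine ⟨fun i => insert (v i) J, fun i => insert (v i) J0, ?_, ?_, ?_⟩
      · intro i i' hii
        by_contra hne'
        have hii' : insert (v i) J = insert (v i') J := hii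
        have : v i ∈ insert (v i') J := by
          rw [← hii']; exact Finset.mem_insert_self _ _
        rcases Finset.mem_insert.1 this with h1 | h1
        · exact hne' (hvinj h1)
        · exact hvJ i h1
      · intro i i' hii
        by_contra hne'
        have hii' : insert (v i) J0 = insert (v i') J0 := hii
        have : v i ∈ insert (v i') J0 := by
          rw [← hii']; exact Finset.mem_insert_self _ _
        rcases Finset.mem_insert.1 this with h1 | h1
        · exact hne' (hvinj h1)
        · exact hvJ0 i h1
      · intro i
        refine ⟨?_, ?_, ?_⟩
        · refine Finset.mem_powersetCard.2 ⟨Finset.insert_subset (hT (hvT i)) hJ, ?_⟩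
          rw [Finset.card_insert_of_notMem (hvJ i), hJc]
        · apply ih
          · exact Finset.insert_subset (hT (hvT i)) (hJ0J.trans hJ)
          · rw [Finset.card_insert_of_notMem (hvJ0 i), hJ0c]; omega
          · have hsd : insert (v i) J0 \ T = J0 \ T := by
              ext x
              simp only [Finset.mem_sdiff, Finset.mem_insert]
              constructor
              · rintro ⟨h1 | h1, h2⟩
                · exact absurd (h1 ▸ hvT i) h2
                · exact ⟨h1, h2⟩
              · rintro ⟨h1, h2⟩; exact ⟨Or.inr h1, h2⟩
            have hsd2 : J0 \ T = (J \ T).erase w := by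
              rw [hJ0def]
              ext x
              simp only [Finset.mem_sdiff, Finset.mem_erase]
              tauto
            rw [hsd, hsd2, Finset.card_erase_of_mem hw, hcard]
            omega
        · exact Finset.union_subset
            (Finset.insert_subset_insert _ hJ0J) (Finset.subset_insert _ _)

theorem stmt19 (j r : ℕ) (hj : 1 ≤ j) (hr : 1 ≤ r) :
    ∃ n0, ∀ n ≥ n0, ∀ T ⊆ range n, T.card = j + r - 1 →
      Percolates (range n) (j + 1) j r (T.powersetCard j) ∧
      ellMin n (j + 1) j r ≤ (j + r - 1).choose j := by
  refine ⟨0, fun n _ T hT hTc => ?_⟩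
  have hsub : T.powersetCard j ⊆ (range n).powersetCard j :=
    Finset.powersetCard_mono hT
  have hperc : Percolates (range n) (j + 1) j r (T.powersetCard j) := by
    refine ⟨j, Finset.Subset.antisymm (aux_subset_powerset _ _ _ _ _ hsub _) ?_⟩
    intro J hJ
    obtain ⟨hJs, hJc⟩ := Finset.mem_powersetCard.1 hJ
    exact aux_key j r hj n T hT hTc j J hJs hJc
      (hJc ▸ Finset.card_le_card (Finset.sdiff_subset))
  refine ⟨hperc, ?_⟩
  apply Nat.sInf_le
  exact ⟨T.powersetCard j, hsub, by rw [Finset.card_powersetCard, hTc], hperc⟩
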